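/- A countable group G is left-orderable if and only if G is isomorphic to a subgroup of the group of orientation-preserving homeomorphisms of the real line. Moreover, the action on ℝ can be chosen so that some point has trivial stabilizer. -/

import Mathlib

/-!
Backward direction: a faithful action on `ℝ` is determined by the orbit of a dense sequence,
and comparing such orbits lexicographically gives a left-invariant order, since every
`g ∈ G` acts on each coordinate by the same increasing map.

Forward direction (dynamical realization): `G` acts on itself by left translations, hence
on `G ×ₗ ℚ` by order automorphisms, freely at `(1, 0)`. By Cantor's back-and-forth theorem
`G ×ₗ ℚ ≃o ℚ`, and every order automorphism of `ℚ` extends, by taking suprema, to one of `ℝ`; the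
extension is multiplicative because order automorphisms of `ℝ` are continuous, hence
determined by their values on `ℚ`.
-/

open Function

theorem OrderIso.eq_of_eqOn_dense {α β : Type*} [TopologicalSpace α] [LinearOrder α]
    [OrderTopology α] [TopologicalSpace β] [LinearOrder β] [OrderTopology β]
    {s : Set α} (hs : Dense s) {a b : α ≃o β} (h : Set.EqOn a b s) : a = b :=
  DFunLike.coe_injective (Continuous.ext_on hs a.continuous b.continuous h)

theorem injective_of_forall_apply_eq_self {G α : Type*} [Group G] [LE α]
    {f : G →* (α ≃o α)} {x : α} (hx : ∀ g, f g x = x → g = 1) : Injective f :=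
  (injective_iff_map_eq_one f).2 fun g hg => hx g (by rw [hg]; rfl)

def IsLeftOrderable (G : Type*) [Mul G] : Prop :=
  ∃ r : G → G → Prop, IsStrictTotalOrder G r ∧ ∀ a b c : G, r a b ↔ r (c * a) (c * b)

theorem StrictMono.toLex_comp_lt_toLex_comp_iff {ι α β : Type*} [LT ι] [LinearOrder α]
    [Preorder β] {σ : α → β} (hσ : StrictMono σ) {u v : ι → α} :
    toLex (σ ∘ u) < toLex (σ ∘ v) ↔ toLex u < toLex v := by
  constructor
  · rintro ⟨i, heq, hlt⟩
    exact ⟨i, fun j hj => hσ.injective (heq j hj), hσ.lt_iff_lt.1 hlt⟩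
  · rintro ⟨i, heq, hlt⟩
    exact ⟨i, fun j hj => congrArg σ (heq j hj), hσ.lt_iff_lt.2 hlt⟩

section OrbitCode

variable {G ι α : Type*} [Group G] [LinearOrder α]

def orbitCode (f : G →* (α ≃o α)) (s : ι → α) (g : G) : Lex (ι → α) :=
  toLex fun i => f g (s i)

theorem orbitCode_mul (f : G →* (α ≃o α)) (s : ι → α) (c g : G) :
    orbitCode f s (c * g) = toLex (f c ∘ ofLex (orbitCode f s g)) := by
  simp only [orbitCode, map_mul]
  rfl

theorem isLeftOrderable_of_injective_orbitCode [LinearOrder ι] [WellFoundedLT ι]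
    {f : G →* (α ≃o α)} {s : ι → α} (hs : Injective (orbitCode f s)) : IsLeftOrderable G := by
  let := LinearOrder.lift' _ hs
  refine ⟨(· < ·), inferInstance, fun a b c => ?_⟩
  change orbitCode f s a < orbitCode f s b ↔ orbitCode f s (c * a) < orbitCode f s (c * b)
  rw [orbitCode_mul, orbitCode_mul, (f c).strictMono.toLex_comp_lt_toLex_comp_iff]
  rfl

theorem injective_orbitCode [TopologicalSpace α] [OrderTopology α] {f : G →* (α ≃o α)}
    (hf : Injective f) {s : ι → α} (hs : DenseRange s) : Injective (orbitCode f s) := by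
  intro a b hab
  refine hf (OrderIso.eq_of_eqOn_dense hs ?_)
  rintro _ ⟨i, rfl⟩
  exact congrArg (· i) hab

end OrbitCode

namespace OrderIso

section RealExtend

variable (f : ℚ ≃o ℚ)

noncomputable def realExtendFun (x : ℝ) : ℝ :=
  sSup ((fun q : ℚ => (f q : ℝ)) '' {q : ℚ | (q : ℝ) < x})

theorem ratCast_apply_le_realExtendFun {q : ℚ} {x : ℝ} (h : (q : ℝ) < x) :
    (f q : ℝ) ≤ f.realExtendFun x := by
  refine le_csSup ?_ ⟨q, h, rfl⟩
  obtain ⟨r, hr⟩ := exists_rat_gt x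
  refine ⟨f r, ?_⟩
  rintro _ ⟨p, hp, rfl⟩
  change ((f p : ℚ) : ℝ) ≤ f r
  exact_mod_cast f.monotone (by exact_mod_cast hp.le.trans hr.le)

theorem realExtendFun_le {r : ℚ} {x : ℝ} (h : x ≤ r) : f.realExtendFun x ≤ f r := by
  obtain ⟨q, hq⟩ := exists_rat_lt x
  refine csSup_le ⟨_, q, hq, rfl⟩ ?_
  rintro _ ⟨p, hp, rfl⟩
  change ((f p : ℚ) : ℝ) ≤ f r
  exact_mod_cast f.monotone (by exact_mod_cast hp.le.trans h)

theorem realExtendFun_ratCast (q : ℚ) : f.realExtendFun q = f q := by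
  refine le_antisymm (f.realExtendFun_le le_rfl) (le_of_forall_lt fun y hy => ?_)
  obtain ⟨s, hys, hsq⟩ := exists_rat_btwn hy
  have hlt : f.symm s < q := by
    rw [← f.lt_iff_lt, f.apply_symm_apply]
    exact_mod_cast hsq
  calc y < s := hys
    _ = f (f.symm s) := by rw [f.apply_symm_apply]
    _ ≤ f.realExtendFun q := f.ratCast_apply_le_realExtendFun (by exact_mod_cast hlt)

theorem realExtendFun_strictMono : StrictMono f.realExtendFun := by
  intro x y hxy
  obtain ⟨p, hxp, hpy⟩ := exists_rat_btwn hxy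
  obtain ⟨q, hpq, hqy⟩ := exists_rat_btwn hpy
  calc f.realExtendFun x ≤ f p := f.realExtendFun_le hxp.le
    _ < f q := by exact_mod_cast f.lt_iff_lt.2 (by exact_mod_cast hpq)
    _ ≤ f.realExtendFun y := f.ratCast_apply_le_realExtendFun hqy

theorem realExtendFun_continuous : Continuous f.realExtendFun := by
  refine f.realExtendFun_strictMono.monotone.continuous_of_denseRange
    (Rat.denseRange_cast.mono ?_)
  rintro _ ⟨q, rfl⟩
  exact ⟨f.symm q, by rw [realExtendFun_ratCast, apply_symm_apply]⟩

theorem realExtendFun_realExtendFun_symm (x : ℝ) :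
    f.realExtendFun (f.symm.realExtendFun x) = x := by
  refine congrFun (Continuous.ext_on Rat.denseRange_cast
    (f.realExtendFun_continuous.comp f.symm.realExtendFun_continuous) continuous_id ?_) x
  rintro _ ⟨q, rfl⟩
  simp [realExtendFun_ratCast]

noncomputable def realExtend : ℝ ≃o ℝ :=
  f.realExtendFun_strictMono.orderIsoOfSurjective _
    fun y => ⟨_, f.realExtendFun_realExtendFun_symm y⟩

theorem realExtend_ratCast (q : ℚ) : f.realExtend q = f q :=
  f.realExtendFun_ratCast q

end RealExtend

noncomputable def realExtendHom : (ℚ ≃o ℚ) →* (ℝ ≃o ℝ) where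
  toFun := realExtend
  map_one' := by
    refine eq_of_eqOn_dense Rat.denseRange_cast ?_
    rintro _ ⟨q, rfl⟩
    simp [realExtend_ratCast]
  map_mul' f g := by
    refine eq_of_eqOn_dense Rat.denseRange_cast ?_
    rintro _ ⟨q, rfl⟩
    simp [realExtend_ratCast]

theorem realExtendHom_ratCast (f : ℚ ≃o ℚ) (q : ℚ) : realExtendHom f q = f q :=
  realExtend_ratCast f q

variable {α β : Type*} [LE α] [LE β]

def conjHom (e : α ≃o β) : (α ≃o α) →* (β ≃o β) where
  toFun u := (e.symm.trans u).trans e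
  map_one' := by ext; simp
  map_mul' u v := by ext; simp

theorem conjHom_apply_apply (e : α ≃o β) (u : α ≃o α) (x : α) : conjHom e u (e x) = e (u x) := by
  simp [conjHom]

end OrderIso

def mulLeftLexHom (G β : Type*) [Group G] [Preorder G] [MulLeftMono G] [Preorder β] :
    G →* (G ×ₗ β ≃o G ×ₗ β) where
  toFun g := Prod.Lex.prodLexCongr (OrderIso.mulLeft g) (OrderIso.refl β)
  map_one' := by ext x; simp [Prod.map]
  map_mul' g h := by ext x; simp [Prod.map, mul_assoc]

theorem exists_injective_hom_orderIso_real_of_countable {G : Type*} [Group G] [LinearOrder G]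
    [MulLeftMono G] [Countable G] :
    ∃ f : G →* (ℝ ≃o ℝ), Injective f ∧ ∃ x : ℝ, ∀ g, f g x = x → g = 1 := by
  have : Countable (G ×ₗ ℚ) := inferInstanceAs (Countable (G × ℚ))
  obtain ⟨e⟩ := Order.iso_of_countable_dense (G ×ₗ ℚ) ℚ
  let f := OrderIso.realExtendHom.comp ((OrderIso.conjHom e).comp (mulLeftLexHom G ℚ))
  have hfree : ∀ g, f g (e (toLex (1, 0))) = e (toLex (1, 0)) → g = 1 := by
    intro g hg
    simp only [f, MonoidHom.comp_apply, OrderIso.realExtendHom_ratCast,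
      OrderIso.conjHom_apply_apply, Rat.cast_inj, EmbeddingLike.apply_eq_iff_eq] at hg
    simpa [mulLeftLexHom] using congrArg (fun z => (ofLex z).1) hg
  exact ⟨f, injective_of_forall_apply_eq_self hfree, _, hfree⟩

theorem IsLeftOrderable.exists_injective_hom_orderIso_real {G : Type*} [Group G] [Countable G]
    (h : IsLeftOrderable G) :
    ∃ f : G →* (ℝ ≃o ℝ), Injective f ∧ ∃ x : ℝ, ∀ g, f g x = x → g = 1 := by
  classical
  obtain ⟨r, hr, hinv⟩ := h
  let := linearOrderOfSTO r
  -- here `a ≤ b` unfolds to `a = b ∨ r a b`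
  have : MulLeftMono G := ⟨fun c a b hab => hab.elim (fun h => Or.inl (congrArg _ h))
    fun h => Or.inr ((hinv a b c).1 h)⟩
  exact exists_injective_hom_orderIso_real_of_countable

/-- A countable group is left-orderable iff it embeds in the group `ℝ ≃o ℝ` of
orientation-preserving homeomorphisms of the line; moreover the action can be
chosen so that some point has trivial stabilizer. -/
theorem stmt10 {G : Type*} [Group G] [Countable G] :
    ((∃ r : G → G → Prop, IsStrictTotalOrder G r ∧
        ∀ a b c : G, r a b ↔ r (c * a) (c * b)) ↔
      ∃ f : G →* (ℝ ≃o ℝ), Function.Injective f) ∧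
    ((∃ r : G → G → Prop, IsStrictTotalOrder G r ∧
        ∀ a b c : G, r a b ↔ r (c * a) (c * b)) →
      ∃ f : G →* (ℝ ≃o ℝ), Function.Injective f ∧
        ∃ x : ℝ, ∀ g : G, f g x = x → g = 1) := by
  have forward (h : IsLeftOrderable G) := h.exists_injective_hom_orderIso_real
  refine ⟨⟨fun h => (forward h).imp fun _ hf => hf.1, ?_⟩, forward⟩
  rintro ⟨f, hf⟩
  exact isLeftOrderable_of_injective_orbitCode
    (injective_orbitCode hf (TopologicalSpace.denseRange_denseSeq ℝ))
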